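/- arXiv:2001.05671 — 5 statements merged into one kernel-verified Lean document; each statement's English description precedes it below -/
import Mathlib

section
/- For any string S and character α, if S does not contain P as a substring, overlap(S) = t, and overlap(P[1..t]·α) < |P|, then S·α does not contain P as a substring, and overlap(S·α) = overlap(P[1..t]·α). -/
/-!
The prefixes of `P` that are suffixes of `S` are exactly the suffixes of the longest one,
`P[1..t]` with `t = overlap(S)`. A nonempty prefix `P[1..k+1]` is a suffix of `S·α` iff
`P[k+1] = α` and `P[1..k]` is a suffix of `S`, i.e. of `P[1..t]`; so `S·α` and `P[1..t]·α`
have the same prefixes of `P` as suffixes, hence the same overlap. An occurrence of `P` in `S·α`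
lies in `S` or is a suffix of `S·α`; the latter would force `overlap(S·α) = |P|`.
-/

/-- `overlapLen P S` is the length of the longest prefix of `P` that is a suffix of `S`. -/
def overlapLen {α : Type*} [DecidableEq α] (P S : List α) : ℕ :=
  Nat.findGreatest (fun k => P.take k <:+ S) P.length

section overlapLen

variable {α : Type*} [DecidableEq α] (P : List α) {S T : List α} {k : ℕ}

lemma overlapLen_le_length : overlapLen P S ≤ P.length :=
  Nat.findGreatest_le _

lemma take_overlapLen_suffix : P.take (overlapLen P S) <:+ S :=
  Nat.findGreatest_spec (P := fun k => P.take k <:+ S) (Nat.zero_le _) (by simp)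

lemma le_overlapLen (hk : k ≤ P.length) (h : P.take k <:+ S) : k ≤ overlapLen P S :=
  Nat.le_findGreatest hk h

lemma overlapLen_eq_length_iff_suffix : overlapLen P S = P.length ↔ P <:+ S := by
  refine ⟨fun h => ?_, fun h => (overlapLen_le_length P).antisymm (le_overlapLen P le_rfl ?_)⟩
  · simpa [h] using take_overlapLen_suffix P (S := S)
  · simpa using h

lemma overlapLen_congr (h : ∀ k ≤ P.length, P.take k <:+ S ↔ P.take k <:+ T) :
    overlapLen P S = overlapLen P T :=
  (le_overlapLen P (overlapLen_le_length P)
      ((h _ (overlapLen_le_length P)).mp (take_overlapLen_suffix P))).antisymm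
    (le_overlapLen P (overlapLen_le_length P)
      ((h _ (overlapLen_le_length P)).mpr (take_overlapLen_suffix P)))

lemma take_suffix_iff_suffix_take_overlapLen (hk : k ≤ P.length) :
    P.take k <:+ S ↔ P.take k <:+ P.take (overlapLen P S) := by
  refine ⟨fun h => List.suffix_of_suffix_length_le h (take_overlapLen_suffix P) ?_,
    fun h => h.trans (take_overlapLen_suffix P)⟩
  rw [List.length_take_of_le hk, List.length_take_of_le (overlapLen_le_length P)]
  exact le_overlapLen P hk h

lemma take_suffix_append_singleton_iff (a : α) (hk : k ≤ P.length) :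
    P.take k <:+ S ++ [a] ↔ P.take k <:+ P.take (overlapLen P S) ++ [a] := by
  cases k with
  | zero => simp
  | succ m =>
    have hm : m < P.length := hk
    have hlen : [P[m]].length = [a].length := rfl
    rw [List.take_succ_eq_append_getElem hm, List.suffix_append_inj_of_length_eq hlen,
      List.suffix_append_inj_of_length_eq hlen, take_suffix_iff_suffix_take_overlapLen P hm.le]

theorem overlapLen_append_singleton (S : List α) (a : α) :
    overlapLen P (S ++ [a]) = overlapLen P (P.take (overlapLen P S) ++ [a]) :=
  overlapLen_congr P fun _ hk => take_suffix_append_singleton_iff P a hk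

end overlapLen

/-- if S is P-free, overlap(S) = t and overlap(P[1..t]·α) < |P|, then
S·α is P-free and overlap(S·α) = overlap(P[1..t]·α). -/
theorem stmt_2 {α : Type*} [DecidableEq α] (P S : List α) (a : α) (t : ℕ)
    (hfree : ¬ P <:+: S) (hov : overlapLen P S = t)
    (hlt : overlapLen P (P.take t ++ [a]) < P.length) :
    ¬ P <:+: (S ++ [a]) ∧ overlapLen P (S ++ [a]) = overlapLen P (P.take t ++ [a]) := by
  subst hov
  have hstep := overlapLen_append_singleton P S a
  refine ⟨fun hocc => ?_, hstep⟩
  rcases List.infix_concat_iff.mp hocc with hsuffix | hinfix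
  · exact hlt.ne (hstep ▸ (overlapLen_eq_length_iff_suffix P).mpr hsuffix)
  · exact hfree hinfix
end

section
/- With e(i,s) as above, if e(i,s) < e(i-1,s) then every longest common subsequence of A[1..i] and B[1..e(i,s)] of length s, witnessing the minimality of e(i,s), ends with the character A[i], and moreover B[e(i,s)] = A[i]. -/
/-!
Write `e = e(i,s)` and let `Z` be a common subsequence of `A[1..i]` and `B[1..e]` of length `s`;
it is a longest one. If `Z` avoided `A[i]` it would be a common subsequence of `A[1..i-1]` and
`B[1..e]`, forcing `e(i-1,s) ≤ e`; if it avoided `B[e]`, minimality of `e` would fail. So the last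
letter of `Z` is both `A[i]` and `B[e]`, and such a `Z` exists since `e ≤ |B|`.
-/

/-- Length of a longest common subsequence of `A` and `B`. -/
noncomputable def lcsLen {α : Type*} (A B : List α) : ℕ :=
  sSup {s | ∃ Z : List α, Z.length = s ∧ Z.Sublist A ∧ Z.Sublist B}

/-- `eTab A B i s` is the minimum `j` such that the LCS length of `A[1..i]` and
`B[1..j]` equals `s`, and `|B| + 1` if no such `j` exists. -/
noncomputable def eTab {α : Type*} (A B : List α) (i s : ℕ) : ℕ :=
  sInf ({j | lcsLen (A.take i) (B.take j) = s} ∪ {B.length + 1})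

namespace List

variable {α : Type*}

theorem getLast?_eq_of_sublist_concat {Z L : List α} {a : α} (h : Z <+ L ++ [a])
    (h' : ¬ Z <+ L) : Z.getLast? = some a := by
  obtain ⟨Z₁, Z₂, rfl, hZ₁, hZ₂⟩ := sublist_append_iff.mp h
  rcases sublist_singleton.mp hZ₂ with rfl | rfl
  · exact absurd (by simpa using hZ₁) h'
  · exact getLast?_concat

theorem getLast?_eq_of_sublist_take [Inhabited α] {Z L : List α} {n : ℕ}
    (h : Z <+ L.take n) (h' : ¬ Z <+ L.take (n - 1)) : Z.getLast? = some L[n - 1]! := by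
  cases n with
  | zero => exact absurd h h'
  | succ n =>
    by_cases hn : n < L.length
    · rw [take_succ_eq_append_getElem hn] at h
      simpa [getElem!_pos L n hn] using getLast?_eq_of_sublist_concat h h'
    · rw [take_of_length_le (by omega)] at h
      exact absurd (by rwa [take_of_length_le (by omega)]) h'

end List

section LCS

variable {α : Type*}

theorem lcsLen_bddAbove (A B : List α) :
    BddAbove {s | ∃ Z : List α, Z.length = s ∧ Z.Sublist A ∧ Z.Sublist B} :=
  ⟨A.length, fun _ ⟨_, hZ, hA, _⟩ => hZ ▸ hA.length_le⟩

theorem exists_sublist_length_eq_lcsLen (A B : List α) :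
    ∃ Z : List α, Z.length = lcsLen A B ∧ Z.Sublist A ∧ Z.Sublist B :=
  Nat.sSup_mem (s := {s | ∃ Z : List α, Z.length = s ∧ Z.Sublist A ∧ Z.Sublist B})
    ⟨0, [], rfl, List.nil_sublist _, List.nil_sublist _⟩ (lcsLen_bddAbove A B)

theorem length_le_lcsLen {A B Z : List α} (hA : Z.Sublist A) (hB : Z.Sublist B) :
    Z.length ≤ lcsLen A B :=
  le_csSup (lcsLen_bddAbove A B) ⟨Z, rfl, hA, hB⟩

theorem lcsLen_mono {A A' B B' : List α} (hA : A.Sublist A') (hB : B.Sublist B') :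
    lcsLen A B ≤ lcsLen A' B' := by
  obtain ⟨Z, hZ, hZA, hZB⟩ := exists_sublist_length_eq_lcsLen A B
  exact hZ ▸ length_le_lcsLen (hZA.trans hA) (hZB.trans hB)

theorem eTab_le_of_lcsLen_eq {A B : List α} {i s j : ℕ}
    (h : lcsLen (A.take i) (B.take j) = s) : eTab A B i s ≤ j :=
  Nat.sInf_le (Or.inl h)

theorem eTab_le_length_succ (A B : List α) (i s : ℕ) : eTab A B i s ≤ B.length + 1 :=
  Nat.sInf_le (Or.inr rfl)

theorem lcsLen_take_eTab {A B : List α} {i s : ℕ} (h : eTab A B i s ≤ B.length) :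
    lcsLen (A.take i) (B.take (eTab A B i s)) = s := by
  rcases Nat.sInf_mem (s := {j | lcsLen (A.take i) (B.take j) = s} ∪ {B.length + 1})
    ⟨_, Or.inr rfl⟩ with hmem | hmem
  · exact hmem
  · have : eTab A B i s = B.length + 1 := hmem
    omega

theorem eTab_le_of_sublist_take {A B Z : List α} {i i' j j' : ℕ} (hi : i' ≤ i) (hj : j' ≤ j)
    (hA : Z.Sublist (A.take i')) (hB : Z.Sublist (B.take j'))
    (hZ : Z.length = lcsLen (A.take i) (B.take j)) :
    eTab A B i' Z.length ≤ j' :=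
  eTab_le_of_lcsLen_eq <| le_antisymm
    (hZ ▸ lcsLen_mono (List.take_sublist_take_left hi) (List.take_sublist_take_left hj))
    (length_le_lcsLen hA hB)

end LCS

theorem stmt_7_general {α : Type*} [Inhabited α] (A B : List α) (i s : ℕ)
    (hlt : eTab A B i s < eTab A B (i-1) s) :
    (∀ Z : List α, Z.length = s → Z.Sublist (A.take i) →
        Z.Sublist (B.take (eTab A B i s)) → Z.getLast? = some (A[i-1]!)) ∧
    B[eTab A B i s - 1]! = A[i-1]! := by
  set e := eTab A B i s
  have hlcs : lcsLen (A.take i) (B.take e) = s :=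
    lcsLen_take_eTab (by have := eTab_le_length_succ A B (i - 1) s; omega)
  have ends : ∀ Z : List α, Z.length = s → Z.Sublist (A.take i) → Z.Sublist (B.take e) →
      Z.getLast? = some A[i-1]! ∧ Z.getLast? = some B[e-1]! := by
    rintro Z rfl hZA hZB
    have hnA : ¬ Z.Sublist (A.take (i - 1)) := fun h =>
      (eTab_le_of_sublist_take (Nat.sub_le i 1) le_rfl h hZB hlcs.symm).not_gt hlt
    have he_pos : 0 < e := Nat.pos_of_ne_zero fun he0 =>
      hnA (by rw [he0, List.take_zero, List.sublist_nil] at hZB; exact hZB ▸ List.nil_sublist _)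
    have hnB : ¬ Z.Sublist (B.take (e - 1)) := fun h =>
      absurd (eTab_le_of_sublist_take le_rfl (Nat.sub_le e 1) hZA h hlcs.symm) (by omega)
    exact ⟨List.getLast?_eq_of_sublist_take hZA hnA, List.getLast?_eq_of_sublist_take hZB hnB⟩
  refine ⟨fun Z hZ hZA hZB => (ends Z hZ hZA hZB).1, ?_⟩
  obtain ⟨Z, hZ, hZA, hZB⟩ := exists_sublist_length_eq_lcsLen (A.take i) (B.take e)
  obtain ⟨hlastA, hlastB⟩ := ends Z (hZ.trans hlcs) hZA hZB
  exact Option.some_injective _ (hlastB.symm.trans hlastA)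

/-- if e(i,s) < e(i-1,s) then every common subsequence of A[1..i] and
B[1..e(i,s)] of length s (such a subsequence is an LCS, witnessing the minimality of
e(i,s)) ends with the character A[i], and moreover B[e(i,s)] = A[i]. -/
theorem stmt_7 {α : Type*} [Inhabited α] (A B : List α) (i s : ℕ)
    (hi : 1 ≤ i) (him : i ≤ A.length) (hs : 1 ≤ s)
    (hlt : eTab A B i s < eTab A B (i-1) s) :
    (∀ Z : List α, Z.length = s → Z.Sublist (A.take i) →
        Z.Sublist (B.take (eTab A B i s)) → Z.getLast? = some (A[i-1]!)) ∧
    B[eTab A B i s - 1]! = A[i-1]! :=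
  stmt_7_general A B i s hlt
end

section
/- With d as defined, the length of an STR-EC-LCS of A and B excluding P equals the largest s such that d(m, s, k) < n+1 for some 0 ≤ k < r (and equals 0 if no such s ≥ 1 exists). -/
/-- `Property A P i s k Z`: Z is a subsequence of A[1..i], Z does not contain P as a
substring, |Z| = s, and overlap(Z) = k. -/
def Property {α : Type*} [DecidableEq α] (A P : List α) (i s k : ℕ) (Z : List α) : Prop :=
  Z.Sublist (A.take i) ∧ ¬ P <:+: Z ∧ Z.length = s ∧ overlapLen P Z = k

/-- `dTab A B P i s k` is the minimum `j` such that some `Z` satisfying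
`Property A P i s k` is a subsequence of `B[1..j]`; `|B| + 1` if no such `Z` exists. -/
noncomputable def dTab {α : Type*} [DecidableEq α] (A B P : List α) (i s k : ℕ) : ℕ :=
  sInf ({j | ∃ Z : List α, Property A P i s k Z ∧ Z.Sublist (B.take j)}
        ∪ {B.length + 1})

section

variable {α : Type*}

lemma overlapLen_lt_length [DecidableEq α] {P Z : List α} (hP : P ≠ []) (hZ : ¬ P <:+: Z) :
    overlapLen P Z < P.length := by
  refine (Nat.findGreatest_le P.length).lt_of_ne fun hEq => hZ ?_
  have hSuffix := Nat.findGreatest_of_ne_zero hEq (List.length_pos_iff.mpr hP).ne'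
  rw [List.take_length] at hSuffix
  exact hSuffix.isInfix

lemma dTab_lt_length_succ_iff [DecidableEq α] (A B P : List α) (i s k : ℕ) :
    dTab A B P i s k < B.length + 1 ↔ ∃ Z, Property A P i s k Z ∧ Z.Sublist B := by
  constructor
  · intro h
    obtain ⟨Z, hZ, hB⟩ | hFallback := Nat.sInf_mem (s :=
      {j | ∃ Z : List α, Property A P i s k Z ∧ Z.Sublist (B.take j)} ∪ {B.length + 1})
      ⟨_, Or.inr rfl⟩
    · exact ⟨Z, hZ, hB.trans (List.take_sublist _ _)⟩
    · exact absurd hFallback h.ne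
  · rintro ⟨Z, hZ, hB⟩
    refine (Nat.sInf_le (Or.inl ⟨Z, hZ, ?_⟩)).trans_lt B.length.lt_succ_self
    rwa [List.take_length]

lemma setOf_dTab_lt_eq_setOf_length_commonSublist [DecidableEq α] (A B P : List α)
    (hP : P ≠ []) :
    {s | ∃ k < P.length, dTab A B P A.length s k < B.length + 1} =
      {s | ∃ Z : List α, Z.length = s ∧ Z.Sublist A ∧ Z.Sublist B ∧ ¬ P <:+: Z} := by
  ext s
  simp only [Set.mem_ofPred_eq, dTab_lt_length_succ_iff, Property, List.take_length]
  constructor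
  · rintro ⟨k, -, Z, ⟨hA, hPZ, hLen, -⟩, hB⟩
    exact ⟨Z, hLen, hA, hB, hPZ⟩
  · rintro ⟨Z, hLen, hA, hB, hPZ⟩
    exact ⟨overlapLen P Z, overlapLen_lt_length hP hPZ, Z, ⟨hA, hPZ, hLen, rfl⟩, hB⟩

lemma isGreatest_sSup_setOf_length_commonSublist (A B P : List α) (hP : P ≠ []) :
    IsGreatest {s | ∃ Z : List α, Z.length = s ∧ Z.Sublist A ∧ Z.Sublist B ∧ ¬ P <:+: Z}
      (sSup {s | ∃ Z : List α, Z.length = s ∧ Z.Sublist A ∧ Z.Sublist B ∧ ¬ P <:+: Z}) := by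
  set S := {s | ∃ Z : List α, Z.length = s ∧ Z.Sublist A ∧ Z.Sublist B ∧ ¬ P <:+: Z}
  have hNonempty : S.Nonempty :=
    ⟨0, [], rfl, List.nil_sublist _, List.nil_sublist _, fun h => hP (List.infix_nil.mp h)⟩
  have hBdd : BddAbove S := by
    refine ⟨A.length, ?_⟩
    rintro s ⟨Z, rfl, hA, -⟩
    exact hA.length_le
  exact ⟨Nat.sSup_mem hNonempty hBdd, fun _ hs => le_csSup hBdd hs⟩

end

/-- the length of an STR-EC-LCS of A and B excluding P (i.e., the maximum
length of a common subsequence of A and B not containing P as a substring) is the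
largest s such that d(m,s,k) < n+1 for some 0 ≤ k < r. -/
theorem stmt_10 {α : Type*} [DecidableEq α] (A B P : List α) (hr : 1 ≤ P.length) :
    IsGreatest {s | ∃ k < P.length, dTab A B P A.length s k < B.length + 1}
      (sSup {s | ∃ Z : List α, Z.length = s ∧ Z.Sublist A ∧ Z.Sublist B ∧ ¬ P <:+: Z}) := by
  have hP : P ≠ [] := List.length_pos_iff.mp hr
  rw [setOf_dTab_lt_eq_setOf_length_commonSublist A B P hP]
  exact isGreatest_sSup_setOf_length_commonSublist A B P hP
end

section
/- Direction (≤) of the STR-EC-LCS recurrence: if Z₁ satisfies Property(i-1,s-1,t), Z₁ is a subsequence of B[1..d(i-1,s-1,t)], j > d(i-1,s-1,t), B[j] = A[i], and overlap(Z₁·A[i]) = k with k < r, then Z₁·A[i] satisfies Property(i,s,k) and is a subsequence of B[1..j]; consequently d(i,s,k) ≤ j. -/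
/-
Append `A[i]` to the witness `Z₁`. Since `Z₁` lies in `B[1..d(i-1,s-1,t)]` and `B[j] = A[i]` with
`j > d(i-1,s-1,t)`, the extended string is a subsequence of both `A[1..i]` and `B[1..j]`. An
occurrence of `P` in `Z₁·A[i]` either lies inside the `P`-free `Z₁` or is a suffix, and a suffix
occurrence would make the overlap equal to `|P| > k`.
-/

theorem overlapLen_eq_length_of_suffix {α : Type*} [DecidableEq α] {P S : List α}
    (h : P <:+ S) : overlapLen P S = P.length :=
  le_antisymm (Nat.findGreatest_le _) (Nat.le_findGreatest le_rfl (by simpa using h))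

theorem not_infix_append_singleton {α : Type*} [DecidableEq α] {P Z : List α} {a : α}
    (hZ : ¬ P <:+: Z) (hov : overlapLen P (Z ++ [a]) < P.length) : ¬ P <:+: Z ++ [a] := by
  rw [List.infix_concat_iff]
  rintro (hsuf | hinf)
  · exact hov.ne (overlapLen_eq_length_of_suffix hsuf)
  · exact hZ hinf

theorem take_succ_eq_append_getElem! {α : Type*} [Inhabited α] {l : List α} {i : ℕ}
    (h : i < l.length) : l.take (i + 1) = l.take i ++ [l[i]!] := by
  rw [getElem!_pos l i h, List.take_succ_eq_append_getElem h]

theorem Property.append_getElem! {α : Type*} [DecidableEq α] [Inhabited α] {A P Z : List α}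
    {i s t k : ℕ} (h : Property A P i s t Z) (hi : i < A.length)
    (hov : overlapLen P (Z ++ [A[i]!]) = k) (hk : k < P.length) :
    Property A P (i + 1) (s + 1) k (Z ++ [A[i]!]) := by
  obtain ⟨hsubA, hfree, hlen, -⟩ := h
  refine ⟨?_, not_infix_append_singleton hfree (hov ▸ hk), by simp [hlen], hov⟩
  rw [take_succ_eq_append_getElem! hi]
  exact hsubA.append (List.Sublist.refl _)

theorem append_getElem!_sublist_take_succ {α : Type*} [Inhabited α] {B Z : List α} {d j : ℕ}
    (hZ : Z.Sublist (B.take d)) (hdj : d ≤ j) (hj : j < B.length) :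
    (Z ++ [B[j]!]).Sublist (B.take (j + 1)) := by
  rw [take_succ_eq_append_getElem! hj]
  exact (hZ.trans (List.take_sublist_take_left hdj)).append (List.Sublist.refl _)

theorem dTab_le_of_sublist {α : Type*} [DecidableEq α] {A B P Z : List α} {i s k j : ℕ}
    (h : Property A P i s k Z) (hZ : Z.Sublist (B.take j)) : dTab A B P i s k ≤ j :=
  Nat.sInf_le (Set.mem_union_left _ ⟨Z, h, hZ⟩)

/-- direction (≤) of the STR-EC-LCS recurrence. -/
theorem stmt_12 {α : Type*} [DecidableEq α] [Inhabited α] (A B P : List α)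
    (i s k t j : ℕ) (Z₁ : List α)
    (hi : 1 ≤ i) (him : i ≤ A.length) (hs : 1 ≤ s) (hk : k < P.length)
    (hprop : Property A P (i-1) (s-1) t Z₁)
    (hZB : Z₁.Sublist (B.take (dTab A B P (i-1) (s-1) t)))
    (hj : dTab A B P (i-1) (s-1) t < j) (hjn : j ≤ B.length)
    (hBj : B[j-1]! = A[i-1]!)
    (hov : overlapLen P (Z₁ ++ [A[i-1]!]) = k) :
    Property A P i s k (Z₁ ++ [A[i-1]!]) ∧
      (Z₁ ++ [A[i-1]!]).Sublist (B.take j) ∧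
      dTab A B P i s k ≤ j := by
  obtain ⟨i, rfl⟩ : ∃ n, i = n + 1 := ⟨i - 1, by omega⟩
  obtain ⟨s, rfl⟩ : ∃ n, s = n + 1 := ⟨s - 1, by omega⟩
  obtain ⟨j, rfl⟩ : ∃ n, j = n + 1 := ⟨j - 1, by omega⟩
  simp only [Nat.add_sub_cancel] at hprop hZB hj hBj hov ⊢
  have hZA : Property A P (i + 1) (s + 1) k (Z₁ ++ [A[i]!]) :=
    hprop.append_getElem! (by omega) hov hk
  have hZB' : (Z₁ ++ [A[i]!]).Sublist (B.take (j + 1)) :=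
    hBj ▸ append_getElem!_sublist_take_succ hZB (by omega) (by omega)
  exact ⟨hZA, hZB', dTab_le_of_sublist hZA hZB'⟩
end

section
/- The table next_σ satisfies: for any 0 ≤ t < r and character α, next_σ(t, α) = overlap(P[1..t]·α), where next_σ is defined by next_σ(t,α) = t+1 if α = P[t+1], and next_σ(t,α) = next_σ(kmp(t), α) otherwise (with next_σ(0,α) = 1 if α = P[1] and 0 otherwise), and kmp(t) is the length of the longest proper border of P[1..t]. -/
/-- `kmp P t` is the length of the longest proper border of `P[1..t]`, i.e. the largest
`b < t` with `P[1..b]` a suffix (hence also a proper prefix) of `P[1..t]`. -/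
def kmp {α : Type*} [DecidableEq α] (P : List α) (t : ℕ) : ℕ :=
  Nat.findGreatest (fun b => b < t ∧ P.take b <:+ P.take t) t

/-!
A prefix `P[1..n+1]` is a suffix of `S·a` exactly when `P[1..n]` is a suffix of `S` and
`P[n+1] = a`. If `a = P[t+1]` the whole of `P[1..t]·a` is such a prefix. Otherwise every
candidate `P[1..n]` with `n + 1 ≤ t` is a proper border of `P[1..t]`, and the proper borders
of `P[1..t]` are exactly the suffixes of its longest one `P[1..kmp t]` that are prefixes of
`P`; so `P[1..t]·a` and `P[1..kmp t]·a` have the same overlap with `P`, and strong induction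
on `t` finishes the proof.
-/

open List

theorem Nat.findGreatest_congr {P Q : ℕ → Prop} [DecidablePred P] [DecidablePred Q] {n : ℕ}
    (h : ∀ k ≤ n, (P k ↔ Q k)) : Nat.findGreatest P n = Nat.findGreatest Q n := by
  induction n with
  | zero => rfl
  | succ n ih =>
    rw [findGreatest_succ, findGreatest_succ, ih fun k hk => h k (by omega),
      if_congr (h _ le_rfl) rfl rfl]

theorem List.take_succ_suffix_append_singleton_iff {α : Type*} {P S : List α} {a : α} {n : ℕ}
    (hn : n < P.length) : P.take (n + 1) <:+ S ++ [a] ↔ P.take n <:+ S ∧ P[n] = a := by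
  rw [take_succ_eq_append_getElem hn,
    suffix_append_inj_of_length_eq (by rfl : [P[n]].length = [a].length), singleton_inj]

section Overlap

variable {α : Type*} [DecidableEq α] {P : List α} {a : α} {t : ℕ}

theorem overlapLen_take_append_getElem (ht : t < P.length) :
    overlapLen P (P.take t ++ [P[t]]) = t + 1 := by
  rw [← take_succ_eq_append_getElem ht, overlapLen, Nat.findGreatest_eq_iff]
  refine ⟨ht, fun _ => suffix_refl _, fun n hn hnP hsuf => ?_⟩
  have := hsuf.length_le
  simp only [length_take] at this
  omega

theorem overlapLen_singleton_of_ne (hP : 0 < P.length) (ha : a ≠ P[0]) :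
    overlapLen P [a] = 0 := by
  rw [overlapLen, Nat.findGreatest_eq_zero_iff]
  rintro (_ | n) hpos hn hsuf
  · exact absurd hpos (lt_irrefl 0)
  rw [← nil_append [a], take_succ_suffix_append_singleton_iff (by omega), suffix_nil,
    take_eq_nil_iff] at hsuf
  obtain ⟨rfl | hnil, hna⟩ := hsuf
  · exact ha hna.symm
  · simp [hnil] at hP

theorem overlapLen_append_singleton_congr {S S' : List α}
    (h : ∀ (n : ℕ) (hn : n < P.length), P[n] = a → (P.take n <:+ S ↔ P.take n <:+ S')) :
    overlapLen P (S ++ [a]) = overlapLen P (S' ++ [a]) := by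
  refine Nat.findGreatest_congr fun k hk => ?_
  rcases k with _ | n
  · simp
  · rw [take_succ_suffix_append_singleton_iff (by omega),
      take_succ_suffix_append_singleton_iff (by omega)]
    exact and_congr_left (h n (by omega))

end Overlap

section Kmp

variable {α : Type*} [DecidableEq α] {P : List α} {n t : ℕ}

theorem kmp_lt_and_suffix (ht : 0 < t) : kmp P t < t ∧ P.take (kmp P t) <:+ P.take t :=
  Nat.findGreatest_spec (P := fun b => b < t ∧ P.take b <:+ P.take t) (Nat.zero_le t)
    ⟨ht, nil_suffix⟩

theorem le_kmp (hn : n < t) (hsuf : P.take n <:+ P.take t) : n ≤ kmp P t :=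
  Nat.le_findGreatest hn.le ⟨hn, hsuf⟩

theorem take_suffix_take_kmp_iff (ht : 0 < t) (hn : n ≤ P.length) :
    P.take n <:+ P.take (kmp P t) ↔ n < t ∧ P.take n <:+ P.take t := by
  obtain ⟨hkmp_lt, hkmp_suf⟩ := kmp_lt_and_suffix (P := P) ht
  constructor
  · intro hsuf
    have := hsuf.length_le
    simp only [length_take] at this
    exact ⟨by omega, hsuf.trans hkmp_suf⟩
  · rintro ⟨hnt, hsuf⟩
    have := le_kmp hnt hsuf
    exact suffix_of_suffix_length_le hsuf hkmp_suf (by simp only [length_take]; omega)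

theorem overlapLen_take_append_of_ne {a : α} (ht0 : 0 < t) (ht : t < P.length)
    (ha : a ≠ P[t]) :
    overlapLen P (P.take t ++ [a]) = overlapLen P (P.take (kmp P t) ++ [a]) := by
  refine overlapLen_append_singleton_congr fun n hn hna => ?_
  rw [take_suffix_take_kmp_iff ht0 hn.le]
  refine ⟨fun hsuf => ⟨lt_of_le_of_ne ?_ ?_, hsuf⟩, And.right⟩
  · have := hsuf.length_le
    simp only [length_take] at this
    omega
  · rintro rfl
    exact ha hna.symm

end Kmp

theorem stmt_16_general {α : Type*} [DecidableEq α] [Inhabited α] (P : List α)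
    (f : ℕ → α → ℕ)
    (h0 : ∀ a : α, f 0 a = if a = P[0]! then 1 else 0)
    (hrec : ∀ t, 1 ≤ t → t < P.length → ∀ a : α,
      f t a = if a = P[t]! then t + 1 else f (kmp P t) a) :
    ∀ t < P.length, ∀ a : α, f t a = overlapLen P (P.take t ++ [a]) := by
  intro t
  induction t using Nat.strong_induction_on with
  | _ t ih =>
  intro ht a
  obtain rfl | ht0 := t.eq_zero_or_pos
  · rw [h0, getElem!_pos P 0 ht]
    split_ifs with ha
    · subst ha
      exact (overlapLen_take_append_getElem ht).symm
    · simpa using (overlapLen_singleton_of_ne ht ha).symm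
  · rw [hrec t ht0 ht, getElem!_pos P t ht]
    split_ifs with ha
    · subst ha
      exact (overlapLen_take_append_getElem ht).symm
    · have hkmp := (kmp_lt_and_suffix (P := P) ht0).1
      rw [ih _ hkmp (hkmp.trans ht), overlapLen_take_append_of_ne ht0 ht ha]

/-- any table `f` satisfying the defining recurrence of `next_σ`
(namely f(0,α) = 1 if α = P[1] else 0; and for 1 ≤ t < r, f(t,α) = t+1 if α = P[t+1]
and f(t,α) = f(kmp(t),α) otherwise) satisfies f(t,α) = overlap(P[1..t]·α) for all
0 ≤ t < r and all α. -/
theorem stmt_16 {α : Type*} [DecidableEq α] [Inhabited α] (P : List α)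
    (hr : 1 ≤ P.length) (f : ℕ → α → ℕ)
    (h0 : ∀ a : α, f 0 a = if a = P[0]! then 1 else 0)
    (hrec : ∀ t, 1 ≤ t → t < P.length → ∀ a : α,
      f t a = if a = P[t]! then t + 1 else f (kmp P t) a) :
    ∀ t < P.length, ∀ a : α, f t a = overlapLen P (P.take t ++ [a]) :=
  stmt_16_general P f h0 hrec
end
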